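/- If M ∈ SL_n lies in the unipotent Bruhat cell for w₀, i.e., M = u₁·w₀·t·u₂ with u₁, u₂ upper unitriangular and t diagonal, then for every m with 0 ≤ m ≤ n the m-th lower-left principal minor of M equals (−1)^{m(m−1)/2} times the m-th leading principal minor of t. -/
import Mathlib

open Matrix

/-- The `m`-th lower-left (south-west) principal minor: last `m` rows, first `m` columns. -/
def swMinor {K : Type*} [Field K] {n : ℕ} (m : ℕ) (h : m ≤ n)
    (M : Matrix (Fin n) (Fin n) K) : K :=
  (M.submatrix (fun i : Fin m => (⟨n - m + i.val, by omega⟩ : Fin n))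
               (fun j : Fin m => Fin.castLE h j)).det

/-- The `m`-th leading (north-west) principal minor of an `n × n` matrix. -/
def nwMinor {K : Type*} [Field K] {n : ℕ} (m : ℕ) (h : m ≤ n)
    (M : Matrix (Fin n) (Fin n) K) : K :=
  (M.submatrix (Fin.castLE h) (Fin.castLE h)).det

/-- Upper unitriangular: upper triangular with all diagonal entries equal to `1`. -/
def IsUpperUnitriangular {K : Type*} [Field K] {n : ℕ}
    (u : Matrix (Fin n) (Fin n) K) : Prop :=
  (∀ i j : Fin n, j < i → u i j = 0) ∧ (∀ i : Fin n, u i i = 1)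

/-- The antidiagonal permutation matrix `w₀`. -/
def w0Mat (K : Type*) [Field K] (n : ℕ) : Matrix (Fin n) (Fin n) K :=
  fun i j => if i.val + j.val = n - 1 then 1 else 0

private lemma sum_restrict {K : Type*} [AddCommMonoid K] {n m : ℕ} (e : Fin m ↪ Fin n)
    (F : Fin n → K) (h0 : ∀ k : Fin n, (∀ a : Fin m, e a ≠ k) → F k = 0) :
    ∑ k, F k = ∑ k, F (e k) := by
  rw [← Finset.sum_map Finset.univ e F]
  refine (Finset.sum_subset (Finset.subset_univ _) ?_).symm
  intro x _ hx
  apply h0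
  intro a ha
  exact hx (Finset.mem_map.mpr ⟨a, Finset.mem_univ _, ha⟩)

private lemma det_w0Mat {K : Type*} [Field K] : ∀ m : ℕ,
    (w0Mat K m).det = (-1 : K) ^ (m * (m - 1) / 2) := by
  intro m
  induction m with
  | zero => simp [Matrix.det_fin_zero]
  | succ m ih =>
    rw [Matrix.det_succ_column_zero]
    have hsub : (w0Mat K (m+1)).submatrix (Fin.last m).succAbove Fin.succ = w0Mat K m := by
      ext i j
      simp only [Matrix.submatrix_apply, Fin.succAbove_last, w0Mat, Fin.coe_castSucc,
        Fin.val_succ]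
      have hi := i.isLt; have hj := j.isLt
      congr 1
      simp only [eq_iff_iff]
      omega
    rw [Finset.sum_eq_single (Fin.last m)]
    · have h1 : w0Mat K (m+1) (Fin.last m) 0 = 1 := by simp [w0Mat]
      rw [h1, hsub, ih]
      have hexp : (m+1) * (m + 1 - 1) / 2 = m + m * (m-1) / 2 := by
        rcases m with _ | m
        · simp
        · have : (m+2) * (m+1) / 2 = (m+1) + (m+1) * m / 2 := by
            have h2 : (m+2)*(m+1) = 2*(m+1) + (m+1)*m := by ring
            omega
          simpa using this
      rw [hexp, pow_add]
      simp [Fin.val_last, mul_comm]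
    · intro i _ hi
      have : w0Mat K (m+1) i 0 = 0 := by
        simp only [w0Mat, Fin.val_zero, add_zero, ite_eq_right_iff]
        intro hval
        exact absurd (Fin.ext hval : i = Fin.last m) hi
      rw [this]; ring
    · intro habs; exact absurd (Finset.mem_univ _) habs

theorem swMinor_of_bruhat_cell {K : Type*} [Field K] {n : ℕ}
    (M u₁ u₂ : Matrix (Fin n) (Fin n) K) (d : Fin n → K)
    (hM : M.det = 1)
    (hu₁ : IsUpperUnitriangular u₁) (hu₂ : IsUpperUnitriangular u₂)
    (hfact : M = u₁ * w0Mat K n * Matrix.diagonal d * u₂) :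
    ∀ m (h : m ≤ n),
      swMinor m h M = (-1 : K) ^ (m * (m - 1) / 2) * nwMinor m h (Matrix.diagonal d) := by
  intro m h
  set W : Matrix (Fin n) (Fin n) K := w0Mat K n * Matrix.diagonal d with hWdef
  have hW : ∀ i j : Fin n, W i j = if (i : ℕ) + (j : ℕ) = n - 1 then d j else 0 := by
    intro i j
    simp [hWdef, Matrix.mul_diagonal, w0Mat, ite_mul]
  have hMW : M = u₁ * W * u₂ := by rw [hfact, hWdef]; noncomm_ring
  -- the row embedding
  set f : Fin m → Fin n := fun i => (⟨n - m + i.val, by omega⟩ : Fin n) with hf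
  have hf_inj : Function.Injective f := by
    intro a b hab
    have := Fin.val_eq_of_eq hab
    simp only [hf] at this
    exact Fin.ext (by omega)
  set ef : Fin m ↪ Fin n := ⟨f, hf_inj⟩ with hef
  set eg : Fin m ↪ Fin n := ⟨Fin.castLE h, Fin.castLE_injective h⟩ with heg
  set A : Matrix (Fin m) (Fin m) K := fun i k => u₁ (f i) (f k) with hA
  set B : Matrix (Fin m) (Fin m) K :=
    fun i j => if (i : ℕ) + (j : ℕ) = m - 1 then d (Fin.castLE h j) else 0 with hB
  set C : Matrix (Fin m) (Fin m) K := fun k j => u₂ (Fin.castLE h k) (Fin.castLE h j) with hC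
  have key : M.submatrix f (Fin.castLE h) = A * B * C := by
    ext i j
    have step1 : ∀ k : Fin n, (∀ a : Fin m, eg a ≠ k) →
        (u₁ * W) (f i) k * u₂ k (Fin.castLE h j) = 0 := by
      intro k hk
      have hkm : m ≤ (k : ℕ) := by
        by_contra hc
        exact hk ⟨(k : ℕ), by omega⟩ (Fin.ext rfl)
      have : u₂ k (Fin.castLE h j) = 0 := by
        apply hu₂.1
        have : (j : ℕ) < m := j.isLt
        exact Fin.lt_def.mpr (by simpa using by omega)
      rw [this, mul_zero]
    have step2 : ∀ k2 : Fin m, ∀ k : Fin n, (∀ a : Fin m, ef a ≠ k) →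
        u₁ (f i) k * W k (Fin.castLE h k2) = 0 := by
      intro k2 k hk
      have hkm : (k : ℕ) < n - m := by
        by_contra hc
        refine hk ⟨(k : ℕ) - (n - m), by omega⟩ (Fin.ext ?_)
        simp only [hef, hf, Function.Embedding.coeFn_mk]
        omega
      have : W k (Fin.castLE h k2) = 0 := by
        rw [hW]
        have hk2 : (k2 : ℕ) < m := k2.isLt
        have : ¬ ((k : ℕ) + ((Fin.castLE h k2 : Fin n) : ℕ) = n - 1) := by
          simp only [Fin.coe_castLE]; omega
        rw [if_neg this]
      rw [this, mul_zero]
    calc M.submatrix f (Fin.castLE h) i j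
        = ∑ k2 : Fin n, (u₁ * W) (f i) k2 * u₂ k2 (Fin.castLE h j) := by
          simp [hMW, Matrix.mul_apply]
      _ = ∑ k2 : Fin m, (u₁ * W) (f i) (Fin.castLE h k2) * u₂ (Fin.castLE h k2) (Fin.castLE h j) :=
          sum_restrict eg _ step1
      _ = ∑ k2 : Fin m, (∑ k1 : Fin m, A i k1 * B k1 k2) * C k2 j := by
          refine Finset.sum_congr rfl fun k2 _ => ?_
          congr 1
          rw [Matrix.mul_apply]
          rw [sum_restrict ef _ (step2 k2)]
          refine Finset.sum_congr rfl fun k1 _ => ?_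
          congr 1
          rw [hW]
          simp only [hB, hef, hf, Function.Embedding.coeFn_mk, Fin.coe_castLE]
          have h1 : (i : ℕ) < m := i.isLt
          have h2 : (k1 : ℕ) < m := k1.isLt
          have h3 : (k2 : ℕ) < m := k2.isLt
          congr 1
          simp only [eq_iff_iff]
          omega
      _ = (A * B * C) i j := by
          simp [Matrix.mul_apply, Finset.sum_mul]
  have hdetA : A.det = 1 := by
    have htri : A.BlockTriangular id := by
      intro a b hab
      apply hu₁.1
      simp only [hf, Fin.lt_def]
      have : (b : ℕ) < (a : ℕ) := hab
      omega
    rw [Matrix.det_of_upperTriangular htri]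
    refine Finset.prod_eq_one fun a _ => ?_
    exact hu₁.2 _
  have hdetC : C.det = 1 := by
    have htri : C.BlockTriangular id := by
      intro a b hab
      apply hu₂.1
      exact Fin.lt_def.mpr (by simpa using hab)
    rw [Matrix.det_of_upperTriangular htri]
    refine Finset.prod_eq_one fun a _ => ?_
    exact hu₂.2 _
  have hBeq : B = w0Mat K m * Matrix.diagonal (fun j : Fin m => d (Fin.castLE h j)) := by
    ext i j
    simp [hB, Matrix.mul_diagonal, w0Mat, ite_mul]
  have hdetB : B.det = (-1 : K) ^ (m * (m-1)/2) * ∏ j : Fin m, d (Fin.castLE h j) := by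
    rw [hBeq, Matrix.det_mul, det_w0Mat, Matrix.det_diagonal]
  have hnw : nwMinor m h (Matrix.diagonal d) = ∏ j : Fin m, d (Fin.castLE h j) := by
    unfold nwMinor
    rw [Matrix.submatrix_diagonal _ _ (Fin.castLE_injective h), Matrix.det_diagonal]
    rfl
  unfold swMinor
  rw [show (M.submatrix (fun i : Fin m => (⟨n - m + i.val, by omega⟩ : Fin n))
      (fun j : Fin m => Fin.castLE h j)) = A * B * C from key]
  rw [Matrix.det_mul, Matrix.det_mul, hdetA, hdetB, hdetC, hnw]
  ring
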